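/- arXiv:2502.17752 — 5 statements merged into one kernel-verified Lean document; each statement's English description precedes it below -/
import Mathlib

section
/- (Batch zonotope fusion inclusion) Let ⟨x̂ᵢ, Rᵢ⟩ ⊂ ℝⁿ, i = 1, ..., L, be zonotopes with Rᵢ ∈ ℝ^{n×r}, and let Mᵢ ∈ ℝ^{n×n}, i = 2, ..., L, be arbitrary matrices. Define the fused zonotope with center x̂ = x̂₁ + Σ_{i=2}^L Mᵢ(x̂ᵢ − x̂₁) and generator matrix R = [(I − Σ_{i=2}^L Mᵢ)R₁, M₂R₂, ..., M_L R_L]. Then the intersection ∩_{i=1}^L ⟨x̂ᵢ, Rᵢ⟩ is contained in ⟨x̂, R⟩. -/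
open Matrix

/-- The zonotope with center `c` and generator matrix `R`. -/
def zonotope {d ι : Type*} [Fintype ι] (c : d → ℝ) (R : Matrix d ι ℝ) :
    Set (d → ℝ) :=
  {z | ∃ u : ι → ℝ, (∀ j, |u j| ≤ 1) ∧ z = c + R.mulVec u}

theorem batch_zonotope_fusion_inclusion
    {n r L : ℕ}
    (x : Fin (L + 1) → (Fin n → ℝ))
    (R : Fin (L + 1) → Matrix (Fin n) (Fin r) ℝ)
    (M : Fin (L + 1) → Matrix (Fin n) (Fin n) ℝ) :
    (⋂ i, zonotope (x i) (R i)) ⊆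
      zonotope
        (x 0 + ∑ i ∈ Finset.univ.filter (· ≠ (0 : Fin (L + 1))),
          (M i).mulVec (x i - x 0))
        (Matrix.of fun j (p : Fin (L + 1) × Fin r) =>
          if p.1 = 0 then
            (((1 : Matrix (Fin n) (Fin n) ℝ) -
              ∑ i ∈ Finset.univ.filter (· ≠ (0 : Fin (L + 1))), M i) * R 0) j p.2
          else (M p.1 * R p.1) j p.2) := by
  intro z hz
  simp only [Set.mem_iInter, zonotope, Set.mem_setOf_eq] at hz ⊢
  choose u hu hzu using hz
  set S : Matrix (Fin n) (Fin n) ℝ :=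
    ∑ i ∈ Finset.univ.filter (· ≠ (0 : Fin (L + 1))), M i with hS
  refine ⟨fun p => u p.1 p.2, fun p => hu p.1 p.2, ?_⟩
  have key : ∀ i, (R i).mulVec (u i) = z - x i := by
    intro i
    rw [hzu i]
    abel
  have hmv : (Matrix.of fun j (p : Fin (L + 1) × Fin r) =>
        if p.1 = 0 then (((1 : Matrix (Fin n) (Fin n) ℝ) - S) * R 0) j p.2
        else (M p.1 * R p.1) j p.2).mulVec (fun p => u p.1 p.2)
      = ((1 - S) * R 0).mulVec (u 0)
        + ∑ i ∈ Finset.univ.filter (· ≠ (0 : Fin (L + 1))),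
            (M i * R i).mulVec (u i) := by
    funext j
    simp only [Matrix.mulVec, dotProduct, Matrix.of_apply, Pi.add_apply,
      Finset.sum_apply]
    rw [Fintype.sum_prod_type, ← Finset.add_sum_erase _ _ (Finset.mem_univ (0 : Fin (L + 1))),
      Finset.filter_ne']
    simp only [↓reduceIte]
    congr 1
    refine Finset.sum_congr rfl ?_
    intro i hi
    rw [Finset.mem_erase] at hi
    simp [hi.1]
  rw [hmv, Matrix.sub_mul, Matrix.one_mul, Matrix.sub_mulVec, key 0]
  have hSmul : (S * R 0).mulVec (u 0) = ∑ i ∈ Finset.univ.filter (· ≠ (0 : Fin (L + 1))),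
      (M i).mulVec (z - x 0) := by
    rw [← Matrix.mulVec_mulVec, key 0, hS]
    funext j
    rw [Finset.sum_apply]
    simp only [Matrix.mulVec, dotProduct, Matrix.sum_apply, Finset.sum_mul]
    exact Finset.sum_comm
  have hMi : ∀ i ∈ Finset.univ.filter (· ≠ (0 : Fin (L + 1))),
      (M i * R i).mulVec (u i) = (M i).mulVec (z - x i) := by
    intro i _
    rw [← Matrix.mulVec_mulVec, key i]
  rw [hSmul, Finset.sum_congr rfl hMi]
  have : ∀ i ∈ Finset.univ.filter (· ≠ (0 : Fin (L + 1))),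
      (M i).mulVec (x i - x 0) - (M i).mulVec (z - x 0) + (M i).mulVec (z - x i) = 0 := by
    intro i _
    rw [← Matrix.mulVec_sub, ← Matrix.mulVec_add]
    have : x i - x 0 - (z - x 0) + (z - x i) = 0 := by abel
    rw [this, Matrix.mulVec_zero]
  have hz0 : ∑ i ∈ Finset.univ.filter (· ≠ (0 : Fin (L + 1))),
      ((M i).mulVec (x i - x 0) - (M i).mulVec (z - x 0) + (M i).mulVec (z - x i)) = 0 :=
    Finset.sum_eq_zero this
  rw [Finset.sum_add_distrib, Finset.sum_sub_distrib] at hz0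
  have h2 : (∑ i ∈ Finset.univ.filter (· ≠ (0 : Fin (L + 1))), (M i).mulVec (z - x i))
      - ((∑ i ∈ Finset.univ.filter (· ≠ (0 : Fin (L + 1))), (M i).mulVec (z - x 0))
        - ∑ i ∈ Finset.univ.filter (· ≠ (0 : Fin (L + 1))), (M i).mulVec (x i - x 0)) = 0 := by
    rw [← hz0]; abel
  rw [sub_eq_zero] at h2
  rw [h2]
  abel
end

section
/- (Two-zonotope fusion inclusion) Let ⟨x̂₁, R₁⟩ and ⟨x̂₂, R₂⟩ be zonotopes in ℝⁿ, and let M ∈ ℝ^{n×n}. Define x̂ = x̂₁ + M(x̂₂ − x̂₁) and R = [(I − M)R₁, M R₂]. Then ⟨x̂₁, R₁⟩ ∩ ⟨x̂₂, R₂⟩ ⊆ ⟨x̂, R⟩. -/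
open Matrix

/-!
Split a common point as `z = (1 - M) z + M z`. Read `z` in the first zonotope for the first
summand and in the second for the second: a linear image of a zonotope is a zonotope, and the
Minkowski sum of two zonotopes is the zonotope with the concatenated generators. The center
`(1 - M) x₁ + M x₂` is `x₁ + M (x₂ - x₁)`.
-/

theorem mulVec_mem_zonotope {d e ι : Type*} [Fintype d] [Fintype ι] {c z : d → ℝ}
    {R : Matrix d ι ℝ} (T : Matrix e d ℝ) (hz : z ∈ zonotope c R) :
    T *ᵥ z ∈ zonotope (T *ᵥ c) (T * R) := by
  obtain ⟨u, hu, rfl⟩ := hz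
  exact ⟨u, hu, by rw [mulVec_add, mulVec_mulVec]⟩

theorem add_mem_zonotope_fromCols {d ι κ : Type*} [Fintype ι] [Fintype κ]
    {c₁ c₂ z₁ z₂ : d → ℝ} {A : Matrix d ι ℝ} {B : Matrix d κ ℝ}
    (h₁ : z₁ ∈ zonotope c₁ A) (h₂ : z₂ ∈ zonotope c₂ B) :
    z₁ + z₂ ∈ zonotope (c₁ + c₂) (fromCols A B) := by
  obtain ⟨u₁, hu₁, rfl⟩ := h₁
  obtain ⟨u₂, hu₂, rfl⟩ := h₂
  refine ⟨Sum.elim u₁ u₂, fun j => ?_, ?_⟩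
  · cases j with
    | inl i => exact hu₁ i
    | inr k => exact hu₂ k
  · rw [fromCols_mulVec_sumElim]
    abel

theorem two_zonotope_fusion_inclusion
    {n r₁ r₂ : ℕ} (x₁ x₂ : Fin n → ℝ)
    (R₁ : Matrix (Fin n) (Fin r₁) ℝ) (R₂ : Matrix (Fin n) (Fin r₂) ℝ)
    (M : Matrix (Fin n) (Fin n) ℝ) :
    zonotope x₁ R₁ ∩ zonotope x₂ R₂ ⊆
      zonotope (x₁ + M.mulVec (x₂ - x₁))
        (Matrix.fromCols ((1 - M) * R₁) (M * R₂)) := by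
  rintro z ⟨h₁, h₂⟩
  have hsplit : z = (1 - M) *ᵥ z + M *ᵥ z := by
    rw [sub_mulVec, one_mulVec, sub_add_cancel]
  have hcenter : x₁ + M *ᵥ (x₂ - x₁) = (1 - M) *ᵥ x₁ + M *ᵥ x₂ := by
    rw [sub_mulVec, one_mulVec, mulVec_sub]
    abel
  rw [hsplit, hcenter]
  exact add_mem_zonotope_fromCols (mulVec_mem_zonotope _ h₁) (mulVec_mem_zonotope _ h₂)
end

section
/- (Optimal sequential fusion gain) Let R_f ∈ ℝ^{n×p} and R_i ∈ ℝ^{n×r} such that R_f R_fᵀ + R_i R_iᵀ is invertible, and let W be symmetric positive definite. Then the function M ↦ ‖(I − M)R_f‖²_W + ‖M R_i‖²_W over M ∈ ℝ^{n×n} attains its minimum at M* = R_f R_fᵀ (R_f R_fᵀ + R_i R_iᵀ)⁻¹. -/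
open Matrix

/-- Square of the weighted Frobenius norm `‖X‖²_W = Tr(XᵀWX)`. -/
def wnorm2 {n : ℕ} {ι : Type*} [Fintype ι]
    (W : Matrix (Fin n) (Fin n) ℝ) (X : Matrix (Fin n) ι ℝ) : ℝ :=
  (Xᵀ * W * X).trace

lemma my_trace_nonneg_of_posSemidef {n : ℕ} {A : Matrix (Fin n) (Fin n) ℝ}
    (hA : A.PosSemidef) : 0 ≤ A.trace := by
  have h : ∀ i, 0 ≤ A i i := fun i => hA.diag_nonneg
  exact Finset.sum_nonneg fun i _ => h i

open scoped MatrixOrder in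
lemma my_trace_mul_nonneg {n : ℕ} {P Q : Matrix (Fin n) (Fin n) ℝ}
    (hP : P.PosSemidef) (hQ : Q.PosSemidef) : 0 ≤ (P * Q).trace := by
  have hsq : CFC.sqrt Q * CFC.sqrt Q = Q := by
    have := CFC.sq_sqrt Q hQ.nonneg; rwa [pow_two] at this
  have hps : ((CFC.sqrt Q)ᴴ * P * CFC.sqrt Q).PosSemidef := hP.conjTranspose_mul_mul_same _
  rw [(CFC.sqrt_nonneg Q).posSemidef.1] at hps
  have h0 : 0 ≤ (CFC.sqrt Q * P * CFC.sqrt Q).trace := my_trace_nonneg_of_posSemidef hps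
  calc (0:ℝ) ≤ (CFC.sqrt Q * P * CFC.sqrt Q).trace := h0
    _ = (P * Q).trace := by
        rw [trace_mul_cycle, hsq, trace_mul_comm]

lemma my_wnorm2_mul {n : ℕ} {ι : Type*} [Fintype ι]
    (W : Matrix (Fin n) (Fin n) ℝ) (Y : Matrix (Fin n) (Fin n) ℝ)
    (R : Matrix (Fin n) ι ℝ) :
    wnorm2 W (Y * R) = (Yᵀ * W * Y * (R * Rᵀ)).trace := by
  unfold wnorm2
  rw [transpose_mul]
  rw [show Rᵀ * Yᵀ * W * (Y * R) = Rᵀ * (Yᵀ * W * Y * R) by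
    simp only [Matrix.mul_assoc]]
  rw [trace_mul_comm]
  simp only [Matrix.mul_assoc]

lemma my_tsymm {n : ℕ} {W P : Matrix (Fin n) (Fin n) ℝ}
    (hWt : Wᵀ = W) (hPt : Pᵀ = P) (Y Z : Matrix (Fin n) (Fin n) ℝ) :
    (Yᵀ * W * Z * P).trace = (Zᵀ * W * Y * P).trace := by
  conv_lhs => rw [← trace_transpose]
  simp only [transpose_mul, transpose_transpose, hWt, hPt]
  rw [trace_mul_comm]
  simp only [mul_assoc]

theorem optimal_sequential_fusion_gain
    {n p r : ℕ} (W : Matrix (Fin n) (Fin n) ℝ) (hW : W.PosDef)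
    (Rf : Matrix (Fin n) (Fin p) ℝ) (Ri : Matrix (Fin n) (Fin r) ℝ)
    (hinv : IsUnit (Rf * Rfᵀ + Ri * Riᵀ)) :
    ∀ M : Matrix (Fin n) (Fin n) ℝ,
      wnorm2 W ((1 - Rf * Rfᵀ * (Rf * Rfᵀ + Ri * Riᵀ)⁻¹) * Rf) +
        wnorm2 W ((Rf * Rfᵀ * (Rf * Rfᵀ + Ri * Riᵀ)⁻¹) * Ri)
      ≤ wnorm2 W ((1 - M) * Rf) + wnorm2 W (M * Ri) := by
  intro M
  have hdet : IsUnit (Rf * Rfᵀ + Ri * Riᵀ).det :=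
    (Matrix.isUnit_iff_isUnit_det _).mp hinv
  set A : Matrix (Fin n) (Fin n) ℝ := Rf * Rfᵀ with hA
  set B : Matrix (Fin n) (Fin n) ℝ := Ri * Riᵀ with hB
  set S : Matrix (Fin n) (Fin n) ℝ := A + B with hS
  have hSS' : S⁻¹ * S = 1 := nonsing_inv_mul S hdet
  have hAt : Aᵀ = A := by rw [hA]; simp [transpose_mul]
  have hBt : Bᵀ = B := by rw [hB]; simp [transpose_mul]
  have hSt : Sᵀ = S := by rw [hS, transpose_add, hAt, hBt]
  have hWt : Wᵀ = W := by
    have := hW.1.eq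
    rwa [conjTranspose_eq_transpose_of_trivial] at this
  set Ms : Matrix (Fin n) (Fin n) ℝ := A * S⁻¹ with hMs
  set D : Matrix (Fin n) (Fin n) ℝ := M - Ms with hD
  set X : Matrix (Fin n) (Fin n) ℝ := 1 - Ms with hX
  have hMsS : Ms * S = A := by rw [hMs, mul_assoc, hSS', mul_one]
  have hXA : X * A = Ms * B := by
    have hBS : B = S - A := by rw [hS]; abel
    rw [hX, hBS]
    simp only [sub_mul, one_mul, mul_sub, hMsS]
  -- rewrite all wnorm2 terms
  rw [my_wnorm2_mul, my_wnorm2_mul, my_wnorm2_mul, my_wnorm2_mul]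
  simp only [← hA, ← hB]
  -- substitute M = Ms + D, 1 - M = X - D
  have hM : M = Ms + D := by rw [hD]; abel
  have h1M : (1 : Matrix (Fin n) (Fin n) ℝ) - M = X - D := by rw [hX, hM]; abel
  rw [h1M, hM]
  -- key cross-term identities
  have h1 : (Dᵀ * W * X * A).trace = (Dᵀ * W * Ms * B).trace := by
    rw [show Dᵀ * W * X * A = Dᵀ * W * (X * A) by simp only [mul_assoc],
        hXA, ← mul_assoc]
  have h2 : (Xᵀ * W * D * A).trace = (Dᵀ * W * X * A).trace :=
    my_tsymm hWt hAt X D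
  have h3 : (Msᵀ * W * D * B).trace = (Dᵀ * W * Ms * B).trace :=
    my_tsymm hWt hBt Ms D
  have hquad : 0 ≤ (Dᵀ * W * D * S).trace := by
    have hPSDl : (Dᵀ * W * D).PosSemidef := by
      have := hW.posSemidef.conjTranspose_mul_mul_same D
      rwa [conjTranspose_eq_transpose_of_trivial] at this
    have hPSDA : A.PosSemidef := by
      have := posSemidef_self_mul_conjTranspose Rf
      rwa [conjTranspose_eq_transpose_of_trivial] at this
    have hPSDB : B.PosSemidef := by
      have := posSemidef_self_mul_conjTranspose Ri
      rwa [conjTranspose_eq_transpose_of_trivial] at this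
    have hPSDS : S.PosSemidef := hPSDA.add hPSDB
    rw [show Dᵀ * W * D * S = (Dᵀ * W * D) * S from rfl]
    exact my_trace_mul_nonneg hPSDl hPSDS
  have hsplit : (Dᵀ * W * D * S).trace
      = (Dᵀ * W * D * A).trace + (Dᵀ * W * D * B).trace := by
    rw [hS, mul_add, trace_add]
  -- expand everything
  simp only [transpose_sub, transpose_add, transpose_one, sub_mul, mul_sub,
    add_mul, mul_add, one_mul, mul_one, trace_sub, trace_add] at *
  linarith
end

section
/- (Sequential fusion preserves state inclusion) Let ⟨ĉ₁, R₁⟩, ..., ⟨ĉ_L, R_L⟩ be zonotopes in ℝⁿ. Define the sequence of fused zonotopes by ⟨x̂_{f₁}, R_{f₁}⟩ = ⟨ĉ₁, R₁⟩ and, for i = 2, ..., L with arbitrary matrices Mᵢ ∈ ℝ^{n×n}, x̂_{fᵢ} = x̂_{f_{i−1}} + Mᵢ(ĉᵢ − x̂_{f_{i−1}}) and R_{fᵢ} = [(I − Mᵢ)R_{f_{i−1}}, Mᵢ Rᵢ]. Then ∩_{i=1}^L ⟨ĉᵢ, Rᵢ⟩ ⊆ ⟨x̂_{f_L}, R_{f_L}⟩.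 -/
open Matrix

/-- Embed a block `A` as the `i`-th block of a block-column matrix, zero elsewhere. -/
def blockEmbed {n r L : ℕ} (i : Fin (L + 1)) (A : Matrix (Fin n) (Fin r) ℝ) :
    Matrix (Fin n) (Fin (L + 1) × Fin r) ℝ :=
  Matrix.of fun j p => if p.1 = i then A j p.2 else 0

lemma blockEmbed_mulVec {n r L : ℕ} (i : Fin (L + 1)) (A : Matrix (Fin n) (Fin r) ℝ)
    (u : Fin (L + 1) × Fin r → ℝ) :
    (blockEmbed i A).mulVec u = A.mulVec (fun k => u (i, k)) := by
  funext j
  simp only [blockEmbed, Matrix.mulVec, dotProduct, Matrix.of_apply,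
    Fintype.sum_prod_type, ite_mul, zero_mul]
  rw [Finset.sum_comm]
  simp

lemma fin_succ_sub_one {L : ℕ} (i : Fin L) : (i.succ : Fin (L + 1)) - 1 = i.castSucc := by
  have h := i.isLt
  have hmod : 1 % (L + 1) = 1 := Nat.mod_eq_of_lt (by omega)
  ext
  rw [Fin.sub_val_of_le (by simp [Fin.le_def, hmod])]
  simp [hmod]

theorem sequential_fusion_state_inclusion
    {n r L : ℕ}
    (c : Fin (L + 1) → (Fin n → ℝ))
    (R : Fin (L + 1) → Matrix (Fin n) (Fin r) ℝ)
    (M : Fin (L + 1) → Matrix (Fin n) (Fin n) ℝ)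
    (xf : Fin (L + 1) → (Fin n → ℝ))
    (Gf : Fin (L + 1) → Matrix (Fin n) (Fin (L + 1) × Fin r) ℝ)
    (hx0 : xf 0 = c 0)
    (hG0 : Gf 0 = blockEmbed 0 (R 0))
    (hx : ∀ i : Fin (L + 1), i ≠ 0 →
      xf i = xf (i - 1) + (M i).mulVec (c i - xf (i - 1)))
    (hG : ∀ i : Fin (L + 1), i ≠ 0 →
      Gf i = (1 - M i) * Gf (i - 1) + blockEmbed i (M i * R i)) :
    (⋂ i, zonotope (c i) (R i)) ⊆
      zonotope (xf (Fin.last L)) (Gf (Fin.last L)) := by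
  intro z hz
  have hmem : ∀ i, z ∈ zonotope (c i) (R i) := fun i => Set.mem_iInter.mp hz i
  suffices h : ∀ i : Fin (L + 1),
      (∀ j (p : Fin (L + 1) × Fin r), i < p.1 → Gf i j p = 0) ∧
      ∃ u : Fin (L + 1) × Fin r → ℝ, (∀ j, |u j| ≤ 1) ∧ z = xf i + (Gf i).mulVec u by
    obtain ⟨_, u, hu, hzu⟩ := h (Fin.last L)
    exact ⟨u, hu, hzu⟩
  intro i
  induction i using Fin.induction with
  | zero =>
    obtain ⟨v, hv, hzv⟩ := hmem 0
    refine ⟨?_, fun p => if p.1 = 0 then v p.2 else 0, ?_, ?_⟩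
    · intro j p hp
      have : p.1 ≠ 0 := by intro h; rw [h] at hp; exact absurd hp (lt_irrefl _)
      simp [hG0, blockEmbed, this]
    · intro p
      by_cases h : p.1 = 0 <;> simp [h, hv]
    · rw [hG0, blockEmbed_mulVec, hx0]
      simpa using hzv
  | succ i ih =>
    obtain ⟨hcol, u, hu, hzu⟩ := ih
    have hne : (i.succ : Fin (L + 1)) ≠ 0 := Fin.succ_ne_zero i
    have hsub : (i.succ : Fin (L + 1)) - 1 = i.castSucc := fin_succ_sub_one i
    have hGi := hG i.succ hne
    have hxi := hx i.succ hne
    rw [hsub] at hGi hxi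
    obtain ⟨v, hv, hzv⟩ := hmem i.succ
    set w : Fin (L + 1) × Fin r → ℝ := fun p => if p.1 = i.succ then v p.2 else u p with hw
    have hcastlt : i.castSucc < i.succ := Fin.castSucc_lt_succ
    constructor
    · intro j p hp
      have h1 : p.1 ≠ i.succ := by intro h; rw [h] at hp; exact absurd hp (lt_irrefl _)
      have h2 : ∀ k, Gf i.castSucc k p = 0 := fun k => hcol k p (lt_trans hcastlt hp)
      simp [hGi, Matrix.add_apply, Matrix.mul_apply, h2, blockEmbed, h1]
    · refine ⟨w, ?_, ?_⟩
      · intro p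
        by_cases h : p.1 = i.succ <;> simp [hw, h, hv, hu]
      · have hGw : (Gf i.castSucc).mulVec w = (Gf i.castSucc).mulVec u := by
          funext j
          simp only [Matrix.mulVec, dotProduct]
          apply Finset.sum_congr rfl
          intro p _
          by_cases h : p.1 = i.succ
          · have : Gf i.castSucc j p = 0 := hcol j p (h ▸ hcastlt)
            simp [this]
          · simp [hw, h]
        have hbw : (blockEmbed i.succ (M i.succ * R i.succ)).mulVec w
            = (M i.succ).mulVec ((R i.succ).mulVec v) := by
          rw [blockEmbed_mulVec]
          have : (fun k => w (i.succ, k)) = v := by funext k; simp [hw]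
          rw [this, ← Matrix.mulVec_mulVec]
        have hRv : (R i.succ).mulVec v = z - c i.succ := by
          rw [hzv, add_sub_cancel_left]
        have hGu : (Gf i.castSucc).mulVec u = z - xf i.castSucc := by
          rw [hzu, add_sub_cancel_left]
        rw [hGi, Matrix.add_mulVec, ← Matrix.mulVec_mulVec, hGw, hGu,
          Matrix.sub_mulVec, Matrix.one_mulVec, hbw, hRv, hxi]
        simp only [Matrix.mulVec_sub]
        funext j
        simp
        ring
end

section
/- (Weighted reduction preserves inclusion) Let R ∈ ℝ^{n×r}, n ≤ q ≤ r, and let R = [R_a R_b] be any column partition with R_a ∈ ℝ^{n×(q−n)} and R_b ∈ ℝ^{n×(r−q+n)}. Define the reduced generator matrix R' = [R_a, b(R_b)] where b(R_b) = diag(|R_b|·𝟙). Then ⟨c, R⟩ ⊆ ⟨c, R'⟩ for any center c ∈ ℝⁿ. -/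
open Matrix

/-!
Splitting the generators as `[R_a R_b]` writes `⟨c, R⟩` as the Minkowski sum `⟨c, R_a⟩ + ⟨0, R_b⟩`,
so it suffices to enclose `⟨0, R_b⟩`. For `‖u‖_∞ ≤ 1` the triangle inequality bounds the `i`-th
coordinate of `R_b u` by the `i`-th row sum `s_i` of `|R_b|`, so `R_b u = diag(s) v` with
`v_i = (R_b u)_i / s_i`, `|v_i| ≤ 1`: the box `⟨0, diag(s)⟩` is the interval hull of `⟨0, R_b⟩`.
-/

open scoped Pointwise

section Zonotope

variable {d ι κ : Type*} [Fintype ι] [Fintype κ]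

theorem zonotope_fromCols (c : d → ℝ) (A : Matrix d ι ℝ) (B : Matrix d κ ℝ) :
    zonotope c (fromCols A B) = zonotope c A + zonotope 0 B := by
  ext z
  rw [Set.mem_add]
  constructor
  · rintro ⟨u, hu, rfl⟩
    refine ⟨c + A *ᵥ (u ∘ Sum.inl), ⟨_, fun _ => hu _, rfl⟩,
      B *ᵥ (u ∘ Sum.inr), ⟨_, fun _ => hu _, (zero_add _).symm⟩, ?_⟩
    rw [fromCols_mulVec, add_assoc]
  · rintro ⟨_, ⟨u, hu, rfl⟩, _, ⟨v, hv, rfl⟩, rfl⟩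
    refine ⟨Sum.elim u v, Sum.forall.2 ⟨hu, hv⟩, ?_⟩
    rw [fromCols_mulVec_sumElim, zero_add, add_assoc]

theorem abs_mulVec_le_sum_abs (A : Matrix d ι ℝ) {u : ι → ℝ} (hu : ∀ j, |u j| ≤ 1) (i : d) :
    |(A *ᵥ u) i| ≤ ∑ j, |A i j| :=
  calc |(A *ᵥ u) i| = |∑ j, A i j * u j| := rfl
    _ ≤ ∑ j, |A i j * u j| := Finset.abs_sum_le_sum_abs _ _
    _ ≤ ∑ j, |A i j| := Finset.sum_le_sum fun j _ => by
        rw [abs_mul]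
        exact mul_le_of_le_one_right (abs_nonneg _) (hu j)

theorem exists_abs_le_one_mul_eq {x s : ℝ} (h : |x| ≤ s) : ∃ t : ℝ, |t| ≤ 1 ∧ s * t = x := by
  have hs : 0 ≤ s := (abs_nonneg x).trans h
  refine ⟨x / s, ?_, ?_⟩
  · rw [abs_div, abs_of_nonneg hs]
    exact div_le_one_of_le₀ h hs
  · rcases hs.eq_or_lt with rfl | hs
    · rw [abs_nonpos_iff.1 h, zero_mul]
    · exact mul_div_cancel₀ x hs.ne'

theorem zonotope_subset_zonotope_diagonal [Fintype d] [DecidableEq d] (c : d → ℝ) (A : Matrix d ι ℝ) :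
    zonotope c A ⊆ zonotope c (diagonal fun i => ∑ j, |A i j|) := by
  rintro _ ⟨u, hu, rfl⟩
  choose v hv hAv using fun i => exists_abs_le_one_mul_eq (abs_mulVec_le_sum_abs A hu i)
  refine ⟨v, hv, ?_⟩
  ext i
  rw [Pi.add_apply, Pi.add_apply, mulVec_diagonal, hAv]

end Zonotope

theorem weighted_reduction_preserves_inclusion_general
    {n q r : ℕ}
    (c : Fin n → ℝ)
    (Ra : Matrix (Fin n) (Fin (q - n)) ℝ)
    (Rb : Matrix (Fin n) (Fin (r - q + n)) ℝ) :
    zonotope c (Matrix.fromCols Ra Rb) ⊆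
      zonotope c
        (Matrix.fromCols Ra (Matrix.diagonal fun i => ∑ j, |Rb i j|)) := by
  rw [zonotope_fromCols, zonotope_fromCols]
  exact Set.add_subset_add_left (zonotope_subset_zonotope_diagonal 0 Rb)

theorem weighted_reduction_preserves_inclusion
    {n q r : ℕ} (hnq : n ≤ q) (hqr : q ≤ r)
    (c : Fin n → ℝ)
    (Ra : Matrix (Fin n) (Fin (q - n)) ℝ)
    (Rb : Matrix (Fin n) (Fin (r - q + n)) ℝ) :
    zonotope c (Matrix.fromCols Ra Rb) ⊆
      zonotope c
        (Matrix.fromCols Ra (Matrix.diagonal fun i => ∑ j, |Rb i j|)) :=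
  weighted_reduction_preserves_inclusion_general c Ra Rb
end
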